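/- α_NL < 1/(2·P_lL). -/
import Mathlib


/-- α_NL: the changing point between Segment 2 and Segment 3. -/
noncomputable def alphaNL (PhH PlH PhL PlL : ℝ) : ℝ :=
  (2 * PhH * PlL ^ 2 + PhH * (PhH + 3 * PlL) - (3 * PhH + PlL) + 2
      - 2 * PhL * Real.sqrt (PhH * PhL * PlH * PlL)) /
    (2 * PlH ^ 2 + 8 * PhH * PlL ^ 2)

/-- α_NL < 1/(2·P_lL). -/
theorem stmt_13 (PhH PlH PhL PlL : ℝ)
    (hPhL : 0 < PhL) (hhh : PhL < PhH) (hHL : PhH ≤ PlL) (hPlL : PlL < 1)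
    (hsH : PhH + PlH = 1) (hsL : PhL + PlL = 1) :
    alphaNL PhH PlH PhL PlL < 1 / (2 * PlL) := by
  have ha : 0 < PhH := hPhL.trans hhh
  have hb : 0 < PlL := ha.trans_le hHL
  have hsq := Real.sqrt_nonneg (PhH * PhL * PlH * PlL)
  have hD : 0 < 2 * PlH ^ 2 + 8 * PhH * PlL ^ 2 := by positivity
  rw [alphaNL, div_lt_div_iff₀ hD (by positivity)]
  have hab : PlL + PhH > 1 := by linarith
  have hq : 0 < 2 * PhH * PlL ^ 2 - (1 - PhH) * PlL + (1 - PhH) ^ 2 := by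
    rcases le_or_gt PhH (1/2) with h | h
    · nlinarith [mul_pos hb hb, sq_nonneg (PlL - (1 - PhH)), mul_pos ha (mul_pos hb hb)]
    · nlinarith [sq_nonneg (PlL - PhH), mul_pos ha hb]
  have hPlH : PlH = 1 - PhH := by linarith
  have hPhL' : PhL = 1 - PlL := by linarith
  subst hPlH hPhL'
  nlinarith [mul_pos (sub_pos.mpr hPlL) hq,
    mul_nonneg (mul_nonneg (by linarith : (0:ℝ) ≤ 2*(1-PlL)) hsq) hb.le,
    mul_nonneg hsq hb.le]
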